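/- For ζ = ξ + iη ∈ ℂ^{n+1} with ξ, η ∈ ℝ^{n+1}: the set γ_ℂ(ζ) = {x ∈ ℝ^{n+1} : |x − ζ|_ℂ² = 0} is contained in the open Euclidean unit ball B_1(0) ⊂ ℝ^{n+1} if and only if ζ belongs to the Lie ball L_{n+1}, i.e. |ξ|² + |η|² + 2(|ξ|²|η|² − ⟨ξ,η⟩²)^{1/2} < 1. -/

import Mathlib

/-!
Writing `x - ζ = (x - ξ) - iη`, the equation `|x - ζ|_ℂ² = 0` says that `x - ξ ⊥ η` and
`‖x - ξ‖ = ‖η‖`. For such `x`, `‖x‖² = ‖ξ‖² + ‖η‖² + 2⟪ξ, x - ξ⟫`, and since `x - ξ ⊥ η` the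
inner product only sees the component `p` of `ξ` orthogonal to `η`; by Cauchy–Schwarz it is at
most `‖p‖ ‖η‖ = (‖ξ‖²‖η‖² - ⟪ξ, η⟫²)^{1/2}`, with equality for `x - ξ` a multiple of `p` (or, when
`p = 0`, for any `x - ξ ⊥ η` of the right length, which exists in dimension at least two). So the
left side of the Lie ball inequality is the maximum of `‖x‖²` over `γ_ℂ(ζ)`.
-/

open scoped RealInnerProductSpace

lemma subset_ball_zero_one_iff_of_isGreatest {E : Type*} [SeminormedAddCommGroup E] {S : Set E}
    {m : ℝ} (hm : IsGreatest ((‖·‖ ^ 2) '' S) m) : S ⊆ Metric.ball 0 1 ↔ m < 1 := by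
  obtain ⟨⟨x, hxS, rfl⟩, hle⟩ := hm
  refine ⟨fun h => ?_, fun h y hy => ?_⟩
  · simpa [pow_lt_one_iff_of_nonneg] using h hxS
  · have : ‖y‖ ^ 2 < 1 := (hle ⟨y, hy, rfl⟩).trans_lt h
    simpa [pow_lt_one_iff_of_nonneg] using this

section InnerProductSpace

variable {F : Type*} [NormedAddCommGroup F] [InnerProductSpace ℝ F]

/-- For `η = 0` the coefficient is `⟪ξ, 0⟫ / 0 = 0`, so this is `ξ` and none of the lemmas below
needs a case split. -/
noncomputable def vecRejection (ξ η : F) : F := ξ - (⟪ξ, η⟫ / ‖η‖ ^ 2) • η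

def gammaC (ξ η : F) : Set F := {x | ‖x - ξ‖ ^ 2 = ‖η‖ ^ 2 ∧ ⟪x - ξ, η⟫ = 0}

lemma inner_vecRejection_self (ξ η : F) : ⟪vecRejection ξ η, η⟫ = 0 := by
  rcases eq_or_ne η 0 with rfl | hη
  · simp
  have : ‖η‖ ≠ 0 := norm_ne_zero_iff.mpr hη
  rw [vecRejection, inner_sub_left, real_inner_smul_left, real_inner_self_eq_norm_sq]
  field_simp
  ring

lemma inner_vecRejection_of_inner_eq_zero {ξ η v : F} (hv : ⟪v, η⟫ = 0) :
    ⟪vecRejection ξ η, v⟫ = ⟪ξ, v⟫ := by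
  rw [vecRejection, inner_sub_left, real_inner_smul_left, real_inner_comm v η, hv, mul_zero,
    sub_zero]

lemma norm_vecRejection_mul_norm (ξ η : F) :
    ‖vecRejection ξ η‖ * ‖η‖ = √(‖ξ‖ ^ 2 * ‖η‖ ^ 2 - ⟪ξ, η⟫ ^ 2) := by
  rcases eq_or_ne η 0 with rfl | hη
  · simp
  have : ‖η‖ ≠ 0 := norm_ne_zero_iff.mpr hη
  have hsq : ‖vecRejection ξ η‖ ^ 2 = ⟪ξ, vecRejection ξ η⟫ := by
    rw [← real_inner_self_eq_norm_sq]
    exact inner_vecRejection_of_inner_eq_zero (inner_vecRejection_self ξ η)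
  rw [← Real.sqrt_sq (by positivity : 0 ≤ ‖vecRejection ξ η‖ * ‖η‖), mul_pow, hsq, vecRejection,
    inner_sub_right, real_inner_smul_right, real_inner_self_eq_norm_sq]
  field_simp

lemma exists_norm_eq_one_inner_eq_zero [FiniteDimensional ℝ F]
    (hF : 2 ≤ Module.finrank ℝ F) (η : F) : ∃ u : F, ‖u‖ = 1 ∧ ⟪u, η⟫ = 0 := by
  have hspan : Module.finrank ℝ (ℝ ∙ η) ≤ 1 := (finrank_span_le_card {η}).trans (by simp)
  have hperp : (ℝ ∙ η)ᗮ ≠ ⊥ := by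
    intro h
    have := (ℝ ∙ η).finrank_add_finrank_orthogonal
    rw [h, finrank_bot] at this
    omega
  obtain ⟨w, hw, hw0⟩ := Submodule.exists_mem_ne_zero_of_ne_bot hperp
  refine ⟨‖w‖⁻¹ • w, norm_smul_inv_norm hw0, ?_⟩
  rw [real_inner_smul_left, real_inner_comm, hw η (Submodule.mem_span_singleton_self η), mul_zero]

lemma norm_sq_eq_of_mem_gammaC {ξ η x : F} (hx : x ∈ gammaC ξ η) :
    ‖x‖ ^ 2 = ‖ξ‖ ^ 2 + ‖η‖ ^ 2 + 2 * ⟪vecRejection ξ η, x - ξ⟫ := by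
  rw [inner_vecRejection_of_inner_eq_zero hx.2, ← hx.1]
  nth_rewrite 1 [← add_sub_cancel ξ x]
  rw [norm_add_sq_real]
  ring

lemma norm_sq_le_of_mem_gammaC {ξ η x : F} (hx : x ∈ gammaC ξ η) :
    ‖x‖ ^ 2 ≤ ‖ξ‖ ^ 2 + ‖η‖ ^ 2 + 2 * √(‖ξ‖ ^ 2 * ‖η‖ ^ 2 - ⟪ξ, η⟫ ^ 2) := by
  have hnorm : ‖x - ξ‖ = ‖η‖ := by
    simpa using congrArg Real.sqrt hx.1
  have hcs : ⟪vecRejection ξ η, x - ξ⟫ ≤ √(‖ξ‖ ^ 2 * ‖η‖ ^ 2 - ⟪ξ, η⟫ ^ 2) := by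
    rw [← norm_vecRejection_mul_norm, ← hnorm]
    exact real_inner_le_norm _ _
  rw [norm_sq_eq_of_mem_gammaC hx]
  linarith

lemma exists_mem_gammaC_norm_sq_eq [FiniteDimensional ℝ F] (hF : 2 ≤ Module.finrank ℝ F)
    (ξ η : F) : ∃ x ∈ gammaC ξ η,
      ‖x‖ ^ 2 = ‖ξ‖ ^ 2 + ‖η‖ ^ 2 + 2 * √(‖ξ‖ ^ 2 * ‖η‖ ^ 2 - ⟪ξ, η⟫ ^ 2) := by
  set p := vecRejection ξ η
  obtain ⟨u, hu, huη, hpu⟩ : ∃ u : F, ‖u‖ = 1 ∧ ⟪u, η⟫ = 0 ∧ ⟪p, u⟫ = ‖p‖ := by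
    rcases eq_or_ne p 0 with hp | hp
    · obtain ⟨u, hu, huη⟩ := exists_norm_eq_one_inner_eq_zero hF η
      exact ⟨u, hu, huη, by simp [hp]⟩
    · refine ⟨‖p‖⁻¹ • p, norm_smul_inv_norm hp, ?_, ?_⟩
      · rw [real_inner_smul_left, inner_vecRejection_self, mul_zero]
      · rw [real_inner_smul_right, real_inner_self_eq_norm_sq]
        field_simp [norm_ne_zero_iff.mpr hp]
  have hx : ξ + ‖η‖ • u ∈ gammaC ξ η := by
    refine ⟨?_, ?_⟩ <;>
      simp only [add_sub_cancel_left, norm_smul, hu, norm_norm, mul_one, real_inner_smul_left,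
        huη, mul_zero]
  refine ⟨_, hx, ?_⟩
  rw [norm_sq_eq_of_mem_gammaC hx, add_sub_cancel_left, real_inner_smul_right, hpu,
    ← norm_vecRejection_mul_norm]
  ring

lemma isGreatest_norm_sq_image_gammaC [FiniteDimensional ℝ F] (hF : 2 ≤ Module.finrank ℝ F)
    (ξ η : F) : IsGreatest ((‖·‖ ^ 2) '' gammaC ξ η)
      (‖ξ‖ ^ 2 + ‖η‖ ^ 2 + 2 * √(‖ξ‖ ^ 2 * ‖η‖ ^ 2 - ⟪ξ, η⟫ ^ 2)) :=
  ⟨(exists_mem_gammaC_norm_sq_eq hF ξ η).imp fun _ => id,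
    Set.forall_mem_image.mpr fun _ => norm_sq_le_of_mem_gammaC⟩

end InnerProductSpace

lemma sum_sq_sub_complex_eq_zero_iff_mem_gammaC {ι : Type*} [Fintype ι]
    (ξ η x : EuclideanSpace ℝ ι) :
    ∑ j, ((x j : ℂ) - ((ξ j : ℂ) + (η j : ℂ) * Complex.I)) ^ 2 = 0 ↔ x ∈ gammaC ξ η := by
  have hsplit : ∑ j, ((x j : ℂ) - ((ξ j : ℂ) + (η j : ℂ) * Complex.I)) ^ 2 =
      ((‖x - ξ‖ ^ 2 - ‖η‖ ^ 2 : ℝ) : ℂ) + ((-2 * ⟪x - ξ, η⟫ : ℝ) : ℂ) * Complex.I := by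
    simp only [← real_inner_self_eq_norm_sq, PiLp.inner_apply, RCLike.inner_apply,
      conj_trivial, PiLp.sub_apply, Finset.mul_sum, ← Finset.sum_sub_distrib]
    push_cast
    rw [Finset.sum_mul, ← Finset.sum_add_distrib]
    refine Finset.sum_congr rfl fun j _ => ?_
    linear_combination (η j : ℂ) ^ 2 * Complex.I_sq
  rw [hsplit, ← Complex.mk_eq_add_mul_I]
  simp [gammaC, Complex.ext_iff, sub_eq_zero]

/-- For `ζ = ξ + iη ∈ ℂ^{n+1}` (`n ≥ 1`), the set
`γ_ℂ(ζ) = {x ∈ ℝ^{n+1} : |x − ζ|_ℂ² = 0}` is contained in the open Euclidean unit ball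
if and only if `|ξ|² + |η|² + 2(|ξ|²|η|² − ⟨ξ,η⟩²)^{1/2} < 1`, i.e. `ζ ∈ L_{n+1}`. -/
theorem gammaC_subset_ball_iff_mem_lieBall (n : ℕ) (hn : 1 ≤ n)
    (ξ η : EuclideanSpace ℝ (Fin (n + 1))) :
    {x : EuclideanSpace ℝ (Fin (n + 1)) |
        ∑ j, ((x j : ℂ) - ((ξ j : ℂ) + (η j : ℂ) * Complex.I)) ^ 2 = 0} ⊆
      Metric.ball (0 : EuclideanSpace ℝ (Fin (n + 1))) 1 ↔
    ‖ξ‖ ^ 2 + ‖η‖ ^ 2 + 2 * Real.sqrt (‖ξ‖ ^ 2 * ‖η‖ ^ 2 - ⟪ξ, η⟫ ^ 2) < 1 := by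
  have hdim : 2 ≤ Module.finrank ℝ (EuclideanSpace ℝ (Fin (n + 1))) := by
    rw [finrank_euclideanSpace_fin]
    omega
  simp_rw [sum_sq_sub_complex_eq_zero_iff_mem_gammaC, Set.ofPred_mem_eq]
  exact subset_ball_zero_one_iff_of_isGreatest (isGreatest_norm_sq_image_gammaC hdim ξ η)
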